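/- arXiv:2311.03185 — 3 statements merged into one kernel-verified Lean document; each statement's English description precedes it below -/
import Mathlib

section
/- Let $G$ be an $n$-vertex graph and $A, B \subseteq V(G)$ disjoint with $|A| = |B|$. Suppose: (1) $G[A,B]$ is $m$-joined for some $m$ (every two disjoint sets of size at least $m$, one in $A$ and one in $B$, have an edge between them); (2) every subset $S \subseteq A$ with $|S| \le m$ has $|N(S) \cap B| \ge 2|S|$; and (3) every subset $S \subseteq B$ with $|S| \le m$ has $|N(S) \cap A| \ge 2|S|$. Then the bipartite graph $G[A,B]$ contains a perfect matching. -/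
open Finset

/-- The key matching step: if the bipartite graph `G[A,B]` between disjoint equal-size
sets `A`, `B` is `m`-joined and small sets on both sides expand by a factor of `2`,
then `G[A,B]` has a perfect matching, here encoded as an injection `f` defined on `A`
with values in `B` along edges of `G` (since `|A| = |B|`, this is a perfect matching). -/
theorem stmt_4 {V : Type*} [Fintype V] [DecidableEq V] (G : SimpleGraph V)
    [DecidableRel G.Adj] (A B : Finset V) (m : ℕ)
    (hdisj : Disjoint A B) (hcard : A.card = B.card)
    (hjoined : ∀ S ⊆ A, ∀ T ⊆ B, m ≤ S.card → m ≤ T.card →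
      ∃ a ∈ S, ∃ b ∈ T, G.Adj a b)
    (hexpA : ∀ S ⊆ A, S.card ≤ m →
      2 * S.card ≤ (B.filter fun b => ∃ a ∈ S, G.Adj a b).card)
    (hexpB : ∀ S ⊆ B, S.card ≤ m →
      2 * S.card ≤ (A.filter fun a => ∃ b ∈ S, G.Adj a b).card) :
    ∃ f : V → V, Set.InjOn f A ∧ ∀ a ∈ A, f a ∈ B ∧ G.Adj a (f a) := by
  -- Hall's condition for arbitrary S ⊆ A
  have hall : ∀ S ⊆ A, S.card ≤ (B.filter fun b => ∃ a ∈ S, G.Adj a b).card := by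
    intro S hS
    set N := B.filter fun b => ∃ a ∈ S, G.Adj a b with hN
    rcases le_or_gt S.card m with hle | hlt
    · have := hexpA S hS hle
      rw [← hN] at this
      omega
    · -- large case
      set T := B \ N with hT
      have hTB : T ⊆ B := sdiff_subset
      have hTm : T.card ≤ m := by
        by_contra h
        push_neg at h
        obtain ⟨a, ha, b, hb, hab⟩ := hjoined S hS T hTB hlt.le h.le
        have : b ∈ N := mem_filter.mpr ⟨hTB hb, a, ha, hab⟩
        exact (mem_sdiff.mp hb).2 this
      have h2 := hexpB T hTB hTm
      -- the neighbourhood of T in A is disjoint from S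
      have hsub : (A.filter fun a => ∃ b ∈ T, G.Adj a b) ⊆ A \ S := by
        intro a ha
        rw [mem_filter] at ha
        obtain ⟨haA, b, hb, hab⟩ := ha
        refine mem_sdiff.mpr ⟨haA, fun haS => ?_⟩
        exact (mem_sdiff.mp hb).2 (mem_filter.mpr ⟨hTB hb, a, haS, hab⟩)
      have h3 : (A.filter fun a => ∃ b ∈ T, G.Adj a b).card ≤ A.card - S.card := by
        calc _ ≤ (A \ S).card := card_le_card hsub
        _ = A.card - S.card := card_sdiff_of_subset hS
      have hNB : N ⊆ B := filter_subset _ _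
      have h4 : N.card + T.card = B.card := by
        rw [hT, card_sdiff_of_subset hNB]
        have := card_le_card hNB
        omega
      have hSA := card_le_card hS
      omega
  -- apply Hall's marriage theorem on the subtype of A
  have key := (Finset.all_card_le_biUnion_card_iff_exists_injective
    (fun a : {x // x ∈ A} => B.filter fun b => G.Adj a.1 b)).mp ?_
  · obtain ⟨f, hfinj, hf⟩ := key
    refine ⟨fun v => if h : v ∈ A then f ⟨v, h⟩ else v, ?_, ?_⟩
    · intro x hx y hy hxy
      rw [mem_coe] at hx hy
      simp only [dif_pos hx, dif_pos hy] at hxy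
      exact congrArg Subtype.val (hfinj hxy)
    · intro a ha
      simp only [dif_pos ha]
      have := hf ⟨a, ha⟩
      rw [mem_filter] at this
      exact ⟨this.1, this.2⟩
  · intro s
    have himg : (s.image Subtype.val) ⊆ A := by
      intro x hx
      obtain ⟨⟨y, hy⟩, _, rfl⟩ := mem_image.mp hx
      exact hy
    have hcards : (s.image Subtype.val).card = s.card :=
      card_image_of_injective _ Subtype.val_injective
    have heq : s.biUnion (fun a : {x // x ∈ A} => B.filter fun b => G.Adj a.1 b)
        = B.filter fun b => ∃ a ∈ s.image Subtype.val, G.Adj a b := by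
      ext b
      simp only [mem_biUnion, mem_filter, mem_image]
      constructor
      · rintro ⟨a, has, hbB, hab⟩
        exact ⟨hbB, a.1, ⟨a, has, rfl⟩, hab⟩
      · rintro ⟨hbB, a, ⟨a', ha's, rfl⟩, hab⟩
        exact ⟨a', ha's, hbB, hab⟩
    rw [heq, ← hcards]
    exact hall _ himg
end

section
/- Let $G$ be a bipartite graph with parts $A$ and $B$ of equal size, and suppose that for some $m \ge 1$: (a) every $S \subseteq A$ with $|S| \le m$ satisfies $|N(S)| \ge 2|S|$; and (b) for all $S \subseteq A$ and $T \subseteq B$ with $|S|, |T| \ge m$ there is an edge between $S$ and $T$; and (c) every $S \subseteq B$ with $|S| \le m$ satisfies $|N(S)| \ge 2|S|$. Then Hall's condition holds: every $S \subseteq A$ satisfies $|N(S)| \ge |S|$. -/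
open Finset

/-- Verification of Hall's condition in a bipartite graph with parts `α`, `β` of equal
size, from `2`-expansion of small sets on both sides together with `m`-joinedness.
`E a b` means there is an edge between `a ∈ α` and `b ∈ β`. -/
theorem stmt_10 {α β : Type*} [Fintype α] [Fintype β] [DecidableEq α] [DecidableEq β]
    (E : α → β → Prop) [∀ a b, Decidable (E a b)]
    (hcard : Fintype.card α = Fintype.card β) (m : ℕ) (hm : 1 ≤ m)
    (hexpA : ∀ S : Finset α, S.card ≤ m →
      2 * S.card ≤ (univ.filter fun b => ∃ a ∈ S, E a b).card)
    (hjoin : ∀ (S : Finset α) (T : Finset β), m ≤ S.card → m ≤ T.card →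
      ∃ a ∈ S, ∃ b ∈ T, E a b)
    (hexpB : ∀ T : Finset β, T.card ≤ m →
      2 * T.card ≤ (univ.filter fun a => ∃ b ∈ T, E a b).card) :
    ∀ S : Finset α, S.card ≤ (univ.filter fun b : β => ∃ a ∈ S, E a b).card := by
  intro S
  by_contra hlt
  push_neg at hlt
  set N : Finset β := univ.filter fun b : β => ∃ a ∈ S, E a b with hN
  -- S is nonempty
  have hSpos : 0 < S.card := by
    rcases Nat.eq_zero_or_pos S.card with h0 | h
    · omega
    · exact h
  -- |S| > m, else expansion contradicts
  have hSm : m < S.card := by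
    by_contra h
    push_neg at h
    have h2 := hexpA S h
    rw [← hN] at h2
    omega
  -- Y = complement of N
  set Y : Finset β := Nᶜ with hY
  have hYcard : Y.card = Fintype.card β - N.card := by
    simp [hY, card_compl]
  have hNle : N.card ≤ Fintype.card β := card_le_univ N
  -- Y small: else hjoin gives an edge into Y ⊆ Nᶜ, contradiction
  have hYm : Y.card < m := by
    by_contra h
    push_neg at h
    obtain ⟨a, ha, b, hb, hab⟩ := hjoin S Y (le_of_lt hSm) h
    have : b ∈ N := mem_filter.mpr ⟨mem_univ b, a, ha, hab⟩
    simp [hY] at hb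
    exact hb this
  -- neighbors of Y avoid S
  have hsub : (univ.filter fun a => ∃ b ∈ Y, E a b) ⊆ univ.filter fun a => a ∉ S := by
    intro a ha
    rw [mem_filter] at ha ⊢
    obtain ⟨-, b, hb, hab⟩ := ha
    refine ⟨mem_univ a, fun haS => ?_⟩
    have : b ∈ N := mem_filter.mpr ⟨mem_univ b, a, haS, hab⟩
    simp [hY] at hb
    exact hb this
  have hexpY := hexpB Y (le_of_lt hYm)
  have hcardc : (univ.filter fun a => a ∉ S).card = Fintype.card α - S.card := by
    have : (univ.filter fun a => a ∉ S) = Sᶜ := by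
      ext a; simp
    rw [this, card_compl]
  have h1 : 2 * Y.card ≤ Fintype.card α - S.card := by
    calc 2 * Y.card ≤ _ := hexpY
    _ ≤ (univ.filter fun a => a ∉ S).card := card_le_card hsub
    _ = Fintype.card α - S.card := hcardc
  have hScard : S.card ≤ Fintype.card α := card_le_univ S
  -- |Y| = card β - |N| > card α - |S|
  omega
end

section
/- Let $D \ge 3$ and $m \ge 1$, let $G$ be a graph, and let $S$ be a $(D,m)$-extendable subgraph of $G$. If $S'$ is obtained from $S$ by deleting a vertex $v$ of degree $1$ in $S$ (keeping $V(S') = V(S) \setminus \{v\}$ and $E(S') = E(S) \setminus \{e\}$ where $e$ is the edge of $S$ at $v$), then $S'$ is $(D,m)$-extendable in $G$. -/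
open Finset

/-- `Γ_G(U)`, the union of neighbourhoods of vertices of `U`. -/
def GammaSet {V : Type*} (G : SimpleGraph V) (U : Finset V) : Set V :=
  ⋃ u ∈ U, G.neighborSet u

/-- A subgraph of `G`, given by its vertex set `SV` and its edges (a simple graph `S`
with `S ≤ G` and all edges inside `SV`), is `(D,m)`-extendable in `G` if it has maximum
degree at most `D` and for all `U ⊆ V(G)` with `1 ≤ |U| ≤ 2m`,
`|Γ_G(U) \ SV| ≥ (D-1)|U| - ∑_{u ∈ U ∩ SV} (d_S(u) - 1)`. -/
def IsExtendable {V : Type*} [DecidableEq V] (G : SimpleGraph V) (D m : ℕ)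
    (SV : Finset V) (S : SimpleGraph V) : Prop :=
  (∀ v, (S.neighborSet v).ncard ≤ D) ∧
  ∀ U : Finset V, 1 ≤ U.card → U.card ≤ 2 * m →
    ((D : ℤ) - 1) * U.card - ∑ u ∈ U ∩ SV, (((S.neighborSet u).ncard : ℤ) - 1)
      ≤ ((GammaSet G U \ (SV : Set V)).ncard : ℤ)

/-- The rollback property: removing a vertex of degree one (together with its unique
edge) from a `(D,m)`-extendable subgraph leaves a `(D,m)`-extendable subgraph. -/
theorem stmt_11 {V : Type*} [Fintype V] [DecidableEq V] (G : SimpleGraph V)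
    (D m : ℕ) (hD : 3 ≤ D) (hm : 1 ≤ m) (SV : Finset V) (S : SimpleGraph V)
    (hSG : S ≤ G) (hsupp : S.support ⊆ (SV : Set V))
    (hext : IsExtendable G D m SV S)
    (v : V) (hv : v ∈ SV) (hdeg : (S.neighborSet v).ncard = 1)
    (S' : SimpleGraph V) (hS' : ∀ a b, S'.Adj a b ↔ (S.Adj a b ∧ a ≠ v ∧ b ≠ v)) :
    IsExtendable G D m (SV.erase v) S' := by
  obtain ⟨hdegS, hboundS⟩ := hext
  obtain ⟨w, hw⟩ := Set.ncard_eq_one.mp hdeg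
  have hadj : S.Adj v w := by
    have : w ∈ S.neighborSet v := by rw [hw]; exact rfl
    exact this
  have hwv : w ≠ v := fun h => S.irrefl (by rwa [h] at hadj)
  have hwSV : w ∈ SV := hsupp ⟨v, hadj.symm⟩
  have hsub : ∀ u, S'.neighborSet u ⊆ S.neighborSet u :=
    fun u b hb => ((hS' u b).mp hb).1
  have hvnot : v ∉ S'.neighborSet w := fun h => (((hS' w v).mp h).2.2 rfl)
  have hNw : S.neighborSet w = insert v (S'.neighborSet w) := by
    ext b
    simp only [SimpleGraph.mem_neighborSet, Set.mem_insert_iff, hS']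
    constructor
    · intro h
      by_cases hb : b = v
      · exact Or.inl hb
      · exact Or.inr ⟨h, hwv, hb⟩
    · rintro (rfl | ⟨h, _, _⟩)
      · exact hadj.symm
      · exact h
  have hNother : ∀ u, u ≠ v → u ≠ w → S'.neighborSet u = S.neighborSet u := by
    intro u huv huw
    ext b
    simp only [SimpleGraph.mem_neighborSet, hS']
    constructor
    · rintro ⟨h, _, _⟩; exact h
    · intro h
      refine ⟨h, huv, fun hb => ?_⟩
      have hu : u ∈ S.neighborSet v := by rw [← hb]; exact h.symm
      rw [hw] at hu
      exact huw (Set.mem_singleton_iff.mp hu)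
  have hdw : ((S.neighborSet w).ncard : ℤ) = ((S'.neighborSet w).ncard : ℤ) + 1 := by
    rw [hNw, Set.ncard_insert_of_notMem hvnot (Set.toFinite _)]
    push_cast; ring
  refine ⟨fun u => le_trans (Set.ncard_le_ncard (hsub u) (Set.toFinite _)) (hdegS u), ?_⟩
  intro U h1 h2
  have key := hboundS U h1 h2
  set f : V → ℤ := fun u => ((S.neighborSet u).ncard : ℤ) - 1 with hf
  set f' : V → ℤ := fun u => ((S'.neighborSet u).ncard : ℤ) - 1 with hf'
  have hTer : U ∩ SV.erase v = (U ∩ SV).erase v := by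
    ext x
    simp only [Finset.mem_erase, Finset.mem_inter]
    tauto
  have hfv : f v = 0 := by simp [hf, hdeg]
  have hsum0 : ∑ u ∈ (U ∩ SV).erase v, f u = ∑ u ∈ U ∩ SV, f u :=
    Finset.sum_erase _ hfv
  have hAB : GammaSet G U \ (↑SV : Set V) ⊆ GammaSet G U \ ↑(SV.erase v) := by
    intro x hx
    exact ⟨hx.1, fun hmem => hx.2 (Finset.mem_coe.mpr
      (Finset.mem_of_mem_erase (Finset.mem_coe.mp hmem)))⟩
  rw [hTer]
  by_cases hwU : w ∈ U
  · -- here v is gained on the RHS and 1 is gained on the LHS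
    have hwmem : w ∈ (U ∩ SV).erase v :=
      Finset.mem_erase.mpr ⟨hwv, Finset.mem_inter.mpr ⟨hwU, hwSV⟩⟩
    have hsum' : ∑ u ∈ (U ∩ SV).erase v, f' u = (∑ u ∈ U ∩ SV, f u) - 1 := by
      rw [← hsum0, ← Finset.sum_erase_add _ f' hwmem, ← Finset.sum_erase_add _ f hwmem]
      have hcongr : ∀ u ∈ ((U ∩ SV).erase v).erase w, f' u = f u := by
        intro u hu
        have huw : u ≠ w := Finset.ne_of_mem_erase hu
        have huv : u ≠ v := Finset.ne_of_mem_erase (Finset.mem_of_mem_erase hu)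
        simp [hf, hf', hNother u huv huw]
      rw [Finset.sum_congr rfl hcongr]
      have : f' w = f w - 1 := by simp only [hf, hf']; omega
      rw [this]; ring
    have hvGamma : v ∈ GammaSet G U := Set.mem_biUnion hwU (hSG hadj.symm)
    have hvnA : v ∉ GammaSet G U \ (↑SV : Set V) := fun h => h.2 (Finset.mem_coe.mpr hv)
    have hins : insert v (GammaSet G U \ (↑SV : Set V)) ⊆ GammaSet G U \ ↑(SV.erase v) := by
      intro x hx
      rcases hx with rfl | hx
      · exact ⟨hvGamma, by simp⟩
      · exact hAB hx
    have hcard : ((GammaSet G U \ (↑SV : Set V)).ncard : ℤ) + 1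
        ≤ ((GammaSet G U \ (↑(SV.erase v) : Set V)).ncard : ℤ) := by
      have h3 := Set.ncard_le_ncard hins (Set.toFinite _)
      rw [Set.ncard_insert_of_notMem hvnA (Set.toFinite _)] at h3
      exact_mod_cast h3
    rw [hsum']
    linarith
  · have hsum' : ∑ u ∈ (U ∩ SV).erase v, f' u = ∑ u ∈ U ∩ SV, f u := by
      rw [← hsum0]
      refine Finset.sum_congr rfl ?_
      intro u hu
      have huv : u ≠ v := Finset.ne_of_mem_erase hu
      have huw : u ≠ w := by
        rintro rfl
        exact hwU (Finset.mem_inter.mp (Finset.mem_of_mem_erase hu)).1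
      simp [hf, hf', hNother u huv huw]
    have hcard : ((GammaSet G U \ (↑SV : Set V)).ncard : ℤ)
        ≤ ((GammaSet G U \ (↑(SV.erase v) : Set V)).ncard : ℤ) :=
      Int.ofNat_le.mpr (Set.ncard_le_ncard hAB (Set.toFinite _))
    rw [hsum']
    linarith
end
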